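/- Let ρ be a density operator on H_A ⊗ H_B ⊗ H_C ⊗ H_D with observables A_i, B_j, C_k, D_l (i,j,k,l ∈ {0,1}) of operator norm ≤ 1. Suppose |⟨A_iB_jC_kD_l⟩ − ⟨A_iB_j⟩⟨C_kD_l⟩| ≤ δ for all i,j,k,l. Then the four-party Svetlichny expression S₄ = ⟨A₀B₀C₀D₀⟩ − Σ(single-flip terms) − Σ(double-flip terms with one index 1 in each pair pattern) + Σ(triple-flip terms) + ⟨A₁B₁C₁D₁⟩ (with signs as in Seevinck–Svetlichny, i.e., sign (−1)^{t(t+1)/2} where t is the number of indices equal to 1) satisfies S₄ ≤ 8 + 16δ. -/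

import Mathlib

open scoped Matrix.Norms.L2Operator Kronecker ComplexOrder

/-!
Clustering replaces each of the 16 correlators `⟨A_i B_j C_k D_l⟩` by the product
`⟨A_i B_j⟩⟨C_k D_l⟩` at a cost of at most `δ` apiece. For product correlations the Svetlichny
expression regroups into a CHSH expression whose four entries, such as `x₀₀ - x₁₁`, have size at
most 2, so it is at most `2 · 2 · 2 = 8`. The two-party expectations are bounded by 1 because
an expectation in a state is bounded by the operator norm of the Hermitian part of the
observable, and the operator norm is submultiplicative on Kronecker products.
-/

namespace Matrix
open scoped MatrixOrder ComplexStarModule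

lemma l2_opNorm_one_le {n : Type*} [Fintype n] [DecidableEq n] : ‖(1 : Matrix n n ℂ)‖ ≤ 1 := by
  nontriviality Matrix n n ℂ
  exact CStarRing.norm_one.le

section Kronecker

variable {m n : Type*} [Fintype m] [Fintype n]

lemma kronecker_nonneg {P : Matrix m m ℂ} {Q : Matrix n n ℂ} (hP : 0 ≤ P) (hQ : 0 ≤ Q) :
    0 ≤ P ⊗ₖ Q :=
  ((nonneg_iff_posSemidef.mp hP).kronecker (nonneg_iff_posSemidef.mp hQ)).nonneg

lemma kronecker_le_kronecker {P P' : Matrix m m ℂ} {Q Q' : Matrix n n ℂ}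
    (hP : 0 ≤ P) (hPP' : P ≤ P') (hQQ' : Q ≤ Q') (hQ' : 0 ≤ Q') : P ⊗ₖ Q ≤ P' ⊗ₖ Q' := by
  have h : P' ⊗ₖ Q' - P ⊗ₖ Q = (P' - P) ⊗ₖ Q' + P ⊗ₖ (Q' - Q) := by
    ext; simp [sub_mul, mul_sub]
  rw [← sub_nonneg] at hPP' hQQ'
  rw [← sub_nonneg, h]
  exact add_nonneg (kronecker_nonneg hPP' hQ') (kronecker_nonneg hP hQQ')

variable [DecidableEq m] [DecidableEq n]

lemma norm_kronecker_le_of_nonneg {P : Matrix m m ℂ} {Q : Matrix n n ℂ} (hP : 0 ≤ P)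
    (hQ : 0 ≤ Q) : ‖P ⊗ₖ Q‖ ≤ ‖P‖ * ‖Q‖ := by
  have hle : P ⊗ₖ Q ≤ algebraMap ℝ _ ‖P‖ ⊗ₖ algebraMap ℝ _ ‖Q‖ :=
    kronecker_le_kronecker hP hP.isSelfAdjoint.le_algebraMap_norm_self
      hQ.isSelfAdjoint.le_algebraMap_norm_self (algebraMap_nonneg _ (norm_nonneg Q))
  have hscalar : algebraMap ℝ (Matrix m m ℂ) ‖P‖ ⊗ₖ algebraMap ℝ (Matrix n n ℂ) ‖Q‖ =
      (‖P‖ * ‖Q‖) • 1 := by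
    rw [Algebra.algebraMap_eq_smul_one, Algebra.algebraMap_eq_smul_one, smul_kronecker,
      kronecker_smul, one_kronecker_one, smul_smul]
  calc ‖P ⊗ₖ Q‖ ≤ ‖(‖P‖ * ‖Q‖) • (1 : Matrix (m × n) (m × n) ℂ)‖ :=
        hscalar ▸ CStarAlgebra.norm_le_norm_of_nonneg_of_le (kronecker_nonneg hP hQ) hle
    _ ≤ ‖P‖ * ‖Q‖ := by
      rw [norm_smul, Real.norm_of_nonneg (by positivity)]
      exact mul_le_of_le_one_right (by positivity) l2_opNorm_one_le

/-- By the C⋆-identity this reduces to the positive matrices `Aᴴ * A` and `Bᴴ * B`. -/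
lemma norm_kronecker_le {m' n' : Type*} [Fintype m'] [Fintype n'] (A : Matrix m' m ℂ)
    (B : Matrix n' n ℂ) : ‖A ⊗ₖ B‖ ≤ ‖A‖ * ‖B‖ := by
  have h := norm_kronecker_le_of_nonneg (posSemidef_conjTranspose_mul_self A).nonneg
    (posSemidef_conjTranspose_mul_self B).nonneg
  rw [mul_kronecker_mul, ← conjTranspose_kronecker, l2_opNorm_conjTranspose_mul_self,
    l2_opNorm_conjTranspose_mul_self, l2_opNorm_conjTranspose_mul_self] at h
  exact (mul_self_le_mul_self_iff (norm_nonneg _) (by positivity)).mpr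
    (by rwa [mul_mul_mul_comm])

lemma norm_kronecker_le_one {m' n' : Type*} [Fintype m'] [Fintype n'] {A : Matrix m' m ℂ}
    {B : Matrix n' n ℂ} (hA : ‖A‖ ≤ 1) (hB : ‖B‖ ≤ 1) : ‖A ⊗ₖ B‖ ≤ 1 :=
  (norm_kronecker_le A B).trans (mul_le_one₀ hA (norm_nonneg B) hB)

end Kronecker

section Trace

variable {n : Type*} [Fintype n]

lemma re_trace_realPart_mul (M : Matrix n n ℂ) {ρ : Matrix n n ℂ} (hρ : ρ.IsHermitian) :
    ((ℜ M : Matrix n n ℂ) * ρ).trace.re = (M * ρ).trace.re := by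
  have h : (star M * ρ).trace = star (M * ρ).trace := by
    rw [← trace_conjTranspose, conjTranspose_mul, hρ.eq, trace_mul_comm]; rfl
  rw [realPart_apply_coe, smul_mul, add_mul, trace_smul, trace_add, h, Complex.smul_re,
    Complex.add_re, Complex.star_def, Complex.conj_re, smul_eq_mul]
  ring

variable [DecidableEq n]

lemma trace_mul_nonneg {X ρ : Matrix n n ℂ} (hX : 0 ≤ X) (hρ : 0 ≤ ρ) : 0 ≤ (X * ρ).trace := by
  obtain ⟨S, rfl⟩ := CStarAlgebra.nonneg_iff_eq_star_mul_self.mp hρ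
  rw [← mul_assoc, trace_mul_comm, ← mul_assoc]
  exact (nonneg_iff_posSemidef.mp (star_right_conjugate_nonneg hX S)).trace_nonneg

lemma re_trace_mul_le_of_isSelfAdjoint {H ρ : Matrix n n ℂ} (hH : IsSelfAdjoint H)
    (hρ : 0 ≤ ρ) : (H * ρ).trace.re ≤ ‖H‖ * ρ.trace.re := by
  have h := trace_mul_nonneg (sub_nonneg.mpr hH.le_algebraMap_norm_self) hρ
  rw [sub_mul, trace_sub, Algebra.algebraMap_eq_smul_one, smul_mul, one_mul, trace_smul,
    sub_nonneg] at h
  simpa using (Complex.le_def.mp h).1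

lemma re_trace_mul_le_norm_mul (M : Matrix n n ℂ) {ρ : Matrix n n ℂ} (hρ : ρ.PosSemidef) :
    (M * ρ).trace.re ≤ ‖M‖ * ρ.trace.re := by
  rw [← re_trace_realPart_mul M hρ.isHermitian]
  exact (re_trace_mul_le_of_isSelfAdjoint (ℜ M).2 hρ.nonneg).trans
    (mul_le_mul_of_nonneg_right (realPart.norm_le M) (Complex.le_def.mp hρ.trace_nonneg).1)

lemma abs_re_trace_mul_le_of_norm_le_one {M ρ : Matrix n n ℂ} (hM : ‖M‖ ≤ 1)
    (hρ : ρ.PosSemidef) (hρtr : ρ.trace = 1) : |(M * ρ).trace.re| ≤ 1 := by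
  have upper := re_trace_mul_le_norm_mul M hρ
  have lower := re_trace_mul_le_norm_mul (-M) hρ
  rw [hρtr, Complex.one_re, mul_one] at upper lower
  rw [neg_mul, trace_neg, Complex.neg_re, norm_neg] at lower
  exact abs_le.mpr ⟨by linarith, by linarith⟩

end Trace

end Matrix

lemma abs_add_add_abs_sub_le {p q s : ℝ} (hp : |p| ≤ s) (hq : |q| ≤ s) :
    |p + q| + |p - q| ≤ 2 * s := by
  rw [abs_le] at hp hq
  cases abs_cases (p + q) <;> cases abs_cases (p - q) <;> linarith

lemma chsh_le {a b p q r s : ℝ} (ha : |a| ≤ r) (hb : |b| ≤ r) (hp : |p| ≤ s) (hq : |q| ≤ s) :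
    a * (p + q) + b * (p - q) ≤ 2 * r * s := by
  have hr : 0 ≤ r := (abs_nonneg a).trans ha
  calc a * (p + q) + b * (p - q) ≤ |a| * |p + q| + |b| * |p - q| := by
        rw [← abs_mul, ← abs_mul]; exact add_le_add (le_abs_self _) (le_abs_self _)
    _ ≤ r * |p + q| + r * |p - q| := by gcongr
    _ = r * (|p + q| + |p - q|) := by ring
    _ ≤ r * (2 * s) := by gcongr; exact abs_add_add_abs_sub_le hp hq
    _ = 2 * r * s := by ring

def svetlichny (E : Fin 2 → Fin 2 → Fin 2 → Fin 2 → ℝ) : ℝ :=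
  ∑ i : Fin 2, ∑ j : Fin 2, ∑ k : Fin 2, ∑ l : Fin 2,
    ((-1 : ℝ)) ^ (((i.val + j.val + k.val + l.val) * (i.val + j.val + k.val + l.val + 1)) / 2) *
      E i j k l

lemma svetlichny_le_add_of_abs_sub_le {E F : Fin 2 → Fin 2 → Fin 2 → Fin 2 → ℝ} {δ : ℝ}
    (h : ∀ i j k l, |E i j k l - F i j k l| ≤ δ) : svetlichny E ≤ svetlichny F + 16 * δ := by
  have hterm : ∀ (t : ℕ) i j k l, (-1 : ℝ) ^ t * E i j k l ≤ (-1) ^ t * F i j k l + δ := by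
    intro t i j k l
    have := (le_abs_self _).trans_eq (abs_mul ((-1 : ℝ) ^ t) (E i j k l - F i j k l))
    rw [abs_neg_one_pow, one_mul] at this
    linarith [h i j k l]
  calc svetlichny E ≤ ∑ i : Fin 2, ∑ j : Fin 2, ∑ k : Fin 2, ∑ l : Fin 2,
        (((-1 : ℝ)) ^ (((i.val + j.val + k.val + l.val) * (i.val + j.val + k.val + l.val + 1)) / 2) *
          F i j k l + δ) := by
        unfold svetlichny; gcongr with i _ j _ k _ l _; exact hterm _ i j k l
    _ = svetlichny F + 16 * δ := by
        simp only [svetlichny, Finset.sum_add_distrib, Finset.sum_const, Finset.card_univ,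
          Fintype.card_fin, nsmul_eq_mul]
        ring

lemma svetlichny_mul_le {x y : Fin 2 → Fin 2 → ℝ} (hx : ∀ i j, |x i j| ≤ 1)
    (hy : ∀ k l, |y k l| ≤ 1) : svetlichny (fun i j k l ↦ x i j * y k l) ≤ 8 := by
  have abs_le_two : ∀ {u v : ℝ}, |u| ≤ 1 → |v| ≤ 1 → |u - v| ≤ 2 ∧ |-(u + v)| ≤ 2 :=
    fun hu hv ↦ ⟨(abs_sub _ _).trans (by linarith), (abs_neg _).trans_le
      ((abs_add_le _ _).trans (by linarith))⟩
  have hchsh := chsh_le (abs_le_two (hx 0 0) (hx 1 1)).1 (abs_le_two (hx 0 1) (hx 1 0)).2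
    (abs_le_two (hy 0 0) (hy 1 1)).1 (abs_le_two (hy 0 1) (hy 1 0)).2
  calc svetlichny (fun i j k l ↦ x i j * y k l)
      = (x 0 0 - x 1 1) * (y 0 0 - y 1 1 + -(y 0 1 + y 1 0)) +
          -(x 0 1 + x 1 0) * (y 0 0 - y 1 1 - -(y 0 1 + y 1 0)) := by
        norm_num [svetlichny, Fin.sum_univ_two]
        ring
    _ ≤ 8 := by linarith

theorem stmt_6_general {dA dB dC dD : Type*} [Fintype dA] [Fintype dB] [Fintype dC] [Fintype dD]
    [DecidableEq dA] [DecidableEq dB] [DecidableEq dC] [DecidableEq dD]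
    (ρ : Matrix (((dA × dB) × dC) × dD) (((dA × dB) × dC) × dD) ℂ)
    (hρ : ρ.PosSemidef) (hρtr : ρ.trace = 1) (δ : ℝ)
    (A : Fin 2 → Matrix dA dA ℂ) (B : Fin 2 → Matrix dB dB ℂ)
    (C : Fin 2 → Matrix dC dC ℂ) (D : Fin 2 → Matrix dD dD ℂ)
    (hAn : ∀ i, ‖A i‖ ≤ 1) (hBn : ∀ j, ‖B j‖ ≤ 1)
    (hCn : ∀ k, ‖C k‖ ≤ 1) (hDn : ∀ l, ‖D l‖ ≤ 1)
    (hcl : ∀ i j k l : Fin 2,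
      |(((A i ⊗ₖ B j ⊗ₖ C k ⊗ₖ D l) * ρ).trace).re -
        (((A i ⊗ₖ B j ⊗ₖ (1 : Matrix dC dC ℂ) ⊗ₖ (1 : Matrix dD dD ℂ)) * ρ).trace).re *
          ((((1 : Matrix dA dA ℂ) ⊗ₖ (1 : Matrix dB dB ℂ) ⊗ₖ C k ⊗ₖ D l) * ρ).trace).re|
        ≤ δ) :
    (∑ i : Fin 2, ∑ j : Fin 2, ∑ k : Fin 2, ∑ l : Fin 2,
      ((-1 : ℝ)) ^ (((i.val + j.val + k.val + l.val) * (i.val + j.val + k.val + l.val + 1)) / 2) *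
        (((A i ⊗ₖ B j ⊗ₖ C k ⊗ₖ D l) * ρ).trace).re) ≤ 8 + 16 * δ := by
  have hx : ∀ i j, |((A i ⊗ₖ B j ⊗ₖ (1 : Matrix dC dC ℂ) ⊗ₖ (1 : Matrix dD dD ℂ)) * ρ).trace.re|
      ≤ 1 := fun i j ↦ Matrix.abs_re_trace_mul_le_of_norm_le_one
    (Matrix.norm_kronecker_le_one (Matrix.norm_kronecker_le_one
      (Matrix.norm_kronecker_le_one (hAn i) (hBn j)) Matrix.l2_opNorm_one_le)
      Matrix.l2_opNorm_one_le) hρ hρtr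
  have hy : ∀ k l, |(((1 : Matrix dA dA ℂ) ⊗ₖ (1 : Matrix dB dB ℂ) ⊗ₖ C k ⊗ₖ D l) * ρ).trace.re|
      ≤ 1 := fun k l ↦ Matrix.abs_re_trace_mul_le_of_norm_le_one
    (Matrix.norm_kronecker_le_one (Matrix.norm_kronecker_le_one
      (Matrix.norm_kronecker_le_one Matrix.l2_opNorm_one_le Matrix.l2_opNorm_one_le) (hCn k))
      (hDn l)) hρ hρtr
  calc _ ≤ _ + 16 * δ := svetlichny_le_add_of_abs_sub_le hcl
    _ ≤ 8 + 16 * δ := by gcongr; exact svetlichny_mul_le hx hy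

/-- Four-party Svetlichny bound from bipartite (AB|CD) clustering: if
`|⟨A_iB_jC_kD_l⟩ − ⟨A_iB_j⟩⟨C_kD_l⟩| ≤ δ` for all `i,j,k,l`, then the Seevinck–Svetlichny
expression `S₄ = Σ (−1)^{t(t+1)/2} ⟨A_iB_jC_kD_l⟩` (with `t` the number of indices equal
to 1) satisfies `S₄ ≤ 8 + 16δ`. -/
theorem stmt_6 {dA dB dC dD : Type*} [Fintype dA] [Fintype dB] [Fintype dC] [Fintype dD]
    [DecidableEq dA] [DecidableEq dB] [DecidableEq dC] [DecidableEq dD]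
    (ρ : Matrix (((dA × dB) × dC) × dD) (((dA × dB) × dC) × dD) ℂ)
    (hρ : ρ.PosSemidef) (hρtr : ρ.trace = 1) (δ : ℝ)
    (A : Fin 2 → Matrix dA dA ℂ) (B : Fin 2 → Matrix dB dB ℂ)
    (C : Fin 2 → Matrix dC dC ℂ) (D : Fin 2 → Matrix dD dD ℂ)
    (hA : ∀ i, (A i).IsHermitian) (hB : ∀ j, (B j).IsHermitian)
    (hC : ∀ k, (C k).IsHermitian) (hD : ∀ l, (D l).IsHermitian)
    (hAn : ∀ i, ‖A i‖ ≤ 1) (hBn : ∀ j, ‖B j‖ ≤ 1)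
    (hCn : ∀ k, ‖C k‖ ≤ 1) (hDn : ∀ l, ‖D l‖ ≤ 1)
    (hcl : ∀ i j k l : Fin 2,
      |(((A i ⊗ₖ B j ⊗ₖ C k ⊗ₖ D l) * ρ).trace).re -
        (((A i ⊗ₖ B j ⊗ₖ (1 : Matrix dC dC ℂ) ⊗ₖ (1 : Matrix dD dD ℂ)) * ρ).trace).re *
          ((((1 : Matrix dA dA ℂ) ⊗ₖ (1 : Matrix dB dB ℂ) ⊗ₖ C k ⊗ₖ D l) * ρ).trace).re|
        ≤ δ) :
    (∑ i : Fin 2, ∑ j : Fin 2, ∑ k : Fin 2, ∑ l : Fin 2,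
      ((-1 : ℝ)) ^ (((i.val + j.val + k.val + l.val) * (i.val + j.val + k.val + l.val + 1)) / 2) *
        (((A i ⊗ₖ B j ⊗ₖ C k ⊗ₖ D l) * ρ).trace).re) ≤ 8 + 16 * δ :=
  stmt_6_general ρ hρ hρtr δ A B C D hAn hBn hCn hDn hcl
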